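/- Let n be a natural number and let μ be a partition of n labelling a conjugacy class of odd permutations. Then s_μ lies in the ideal of the subalgebra A (the ℚ-subalgebra of ℚ[S_n] generated by {s_i : 1 ≤ i ≤ supp(μ)}) generated, as an ideal of A, by the even cycle sums {s_{2j} : 2 ≤ 2j ≤ supp(μ)}. Equivalently, s_μ can be expressed as a polynomial over ℚ in the cycle sums s_i with i ≤ supp(μ) in such a way that every monomial in the expression contains at least one factor s_{2j} with 2j even. -/

import Mathlib

/-- `classSum n m` is the sum, in the group algebra `ℚ[Sₙ]`, of all permutations
whose cycle type is the multiset `m` (parts of size 1 being suppressed, as in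
Mathlib's `Equiv.Perm.cycleType`). -/
noncomputable def classSum (n : ℕ) (m : Multiset ℕ) : MonoidAlgebra ℚ (Equiv.Perm (Fin n)) :=
  ∑ σ ∈ Finset.univ.filter (fun σ : Equiv.Perm (Fin n) => σ.cycleType = m),
    MonoidAlgebra.single σ (1 : ℚ)

/-- The cycle sum `sᵢ`: the sum of all `i`-cycles in `Sₙ` for `i ≥ 2`, and the
identity of `ℚ[Sₙ]` for `i ≤ 1`. -/
noncomputable def cycleSum (n i : ℕ) : MonoidAlgebra ℚ (Equiv.Perm (Fin n)) :=
  if i < 2 then 1 else classSum n {i}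

/-- The support of a partition `μ` of `n`: the sum of the parts of size at
least 2, i.e. `n` minus the number of parts equal to 1. -/
def Nat.Partition.supp {n : ℕ} (μ : n.Partition) : ℕ :=
  (μ.parts.filter (2 ≤ ·)).sum

/-!
Induct on the number of points moved by an odd permutation `σ` of cycle type `m`. The product
`P = ∏_{i ∈ m} sᵢ` is central; it is supported on permutations of the sign of `σ` moving at
most as many points as `σ`, and those moving exactly as many have cycle type `m`. Its
coefficient `c` at `σ` is at least `1`, because `σ` is the product of its own disjoint cycles.
So `P - c • s_m` is a combination of class sums of odd classes of smaller support, which lie in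
the ideal by induction, while `P` itself does because an odd permutation has a cycle of even
length.
-/

namespace MonoidAlgebra

variable {k G : Type*} [Group G]

section Semiring

variable [Semiring k]

theorem exists_mul_eq_of_coeff_mul_ne_zero {x y : k[G]} {g : G}
    (h : (x * y).coeff g ≠ 0) : ∃ a b, x.coeff a ≠ 0 ∧ y.coeff b ≠ 0 ∧ a * b = g := by
  classical
  obtain ⟨a, ha, b, hb, hab⟩ :=
    Finset.mem_mul.1 (support_coeff_mul_subset x y (Finsupp.mem_support_iff.2 h))
  exact ⟨a, b, Finsupp.mem_support_iff.1 ha, Finsupp.mem_support_iff.1 hb, hab⟩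

theorem coeff_mul_coeff_le_coeff_mul [PartialOrder k] [IsOrderedRing k] {x y : k[G]}
    (hx : ∀ g, 0 ≤ x.coeff g) (hy : ∀ g, 0 ≤ y.coeff g) (a b : G) :
    x.coeff a * y.coeff b ≤ (x * y).coeff (a * b) := by
  rw [coeff_mul_apply_left, Finsupp.sum]
  by_cases ha : x.coeff a = 0
  · rw [ha, zero_mul]; exact Finset.sum_nonneg fun c _ => mul_nonneg (hx c) (hy _)
  · simpa using Finset.single_le_sum (f := fun c => x.coeff c * y.coeff (c⁻¹ * (a * b)))
      (fun c _ => mul_nonneg (hx c) (hy _)) (Finsupp.mem_support_iff.2 ha)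

theorem coeff_mul_nonneg [PartialOrder k] [IsOrderedRing k] {x y : k[G]}
    (hx : ∀ g, 0 ≤ x.coeff g) (hy : ∀ g, 0 ≤ y.coeff g) (g : G) :
    0 ≤ (x * y).coeff g := by
  rw [coeff_mul_apply_left, Finsupp.sum]
  exact Finset.sum_nonneg fun c _ => mul_nonneg (hx c) (hy _)

end Semiring

section CommSemiring

variable [CommSemiring k]

theorem mem_center_of_coeff_conj {x : k[G]}
    (hx : ∀ c g, x.coeff (c * g * c⁻¹) = x.coeff g) : x ∈ Subalgebra.center k (k[G]) := by
  rw [Subalgebra.mem_center_iff]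
  intro y
  induction y using induction_linear with
  | zero => simp
  | add y z hy hz => rw [add_mul, mul_add, hy, hz]
  | single c r =>
    ext g
    rw [coeff_single_mul_apply, coeff_mul_single_apply, mul_comm, ← hx c⁻¹ (g * c⁻¹)]
    group

theorem coeff_conj_of_mem_center {x : k[G]} (hx : x ∈ Subalgebra.center k (k[G]))
    (c g : G) : x.coeff (c * g * c⁻¹) = x.coeff g := by
  have h := congrArg (coeff · (c * g)) (Subalgebra.mem_center_iff.1 hx (single c 1))
  simpa [coeff_single_mul_apply, coeff_mul_single_apply] using h.symm

end CommSemiring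

end MonoidAlgebra

open Equiv Equiv.Perm Finset MonoidAlgebra

section ClassSums

variable {n : ℕ}

theorem coeff_classSum (m : Multiset ℕ) (σ : Perm (Fin n)) :
    (classSum n m).coeff σ = if σ.cycleType = m then 1 else 0 := by
  classical
  simp [classSum, coeff_sum, Finsupp.single_apply]

theorem coeff_classSum_nonneg (m : Multiset ℕ) (σ : Perm (Fin n)) :
    0 ≤ (classSum n m).coeff σ := by
  rw [coeff_classSum]; split_ifs <;> norm_num

theorem classSum_mem_center (m : Multiset ℕ) :
    classSum n m ∈ Subalgebra.center ℚ (ℚ[Perm (Fin n)]) :=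
  mem_center_of_coeff_conj fun c g => by rw [coeff_classSum, coeff_classSum, cycleType_conj]

theorem coeff_eq_of_cycleType_eq {x : ℚ[Perm (Fin n)]}
    (hx : x ∈ Subalgebra.center ℚ (ℚ[Perm (Fin n)])) {σ τ : Perm (Fin n)}
    (h : σ.cycleType = τ.cycleType) : x.coeff σ = x.coeff τ := by
  obtain ⟨c, rfl⟩ := isConj_iff.1 (isConj_iff_cycleType_eq.2 h)
  exact (coeff_conj_of_mem_center hx c σ).symm

theorem mem_span_classSum_of_mem_center {x : ℚ[Perm (Fin n)]}
    (hx : x ∈ Subalgebra.center ℚ (ℚ[Perm (Fin n)])) :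
    x ∈ Submodule.span ℚ
      ((fun g : Perm (Fin n) => classSum n g.cycleType) '' {g | x.coeff g ≠ 0}) := by
  classical
  have hfibers : x = ∑ ν ∈ univ.image (cycleType (α := Fin n)),
      ∑ σ with σ.cycleType = ν, single σ (x.coeff σ) := by
    rw [sum_fiberwise_of_maps_to fun σ _ => mem_image_of_mem _ (mem_univ σ),
      ← Finsupp.sum_fintype _ _ (by simp), sum_coeff_single]
  rw [hfibers]
  refine Submodule.sum_mem _ fun ν hν => ?_
  obtain ⟨σ, -, rfl⟩ := mem_image.1 hν
  have hfiber : ∑ τ with τ.cycleType = σ.cycleType, single τ (x.coeff τ) =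
      x.coeff σ • classSum n σ.cycleType := by
    rw [classSum, smul_sum]
    refine sum_congr rfl fun τ hτ => ?_
    rw [smul_single', mul_one, coeff_eq_of_cycleType_eq hx (mem_filter.1 hτ).2]
  rw [hfiber]
  by_cases h : x.coeff σ = 0
  · simp [h]
  · exact Submodule.smul_mem _ _ (Submodule.subset_span ⟨σ, by rwa [← hfibers], rfl⟩)

/-- Taken in the centre, which is commutative, so that the product can be indexed by a multiset. -/
noncomputable def cycleProd (n : ℕ) (m : Multiset ℕ) : ℚ[Perm (Fin n)] :=
  (m.map fun i => (⟨classSum n {i}, classSum_mem_center {i}⟩ :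
    Subalgebra.center ℚ (ℚ[Perm (Fin n)]))).prod

theorem cycleProd_zero : cycleProd n 0 = 1 := rfl

theorem cycleProd_cons (i : ℕ) (m : Multiset ℕ) :
    cycleProd n (i ::ₘ m) = classSum n {i} * cycleProd n m := by
  simp [cycleProd]

theorem cycleProd_mem_center (m : Multiset ℕ) :
    cycleProd n m ∈ Subalgebra.center ℚ (ℚ[Perm (Fin n)]) :=
  Subtype.prop _

theorem coeff_cycleProd_nonneg (m : Multiset ℕ) (g : Perm (Fin n)) :
    0 ≤ (cycleProd n m).coeff g := by
  induction m using Multiset.induction_on generalizing g with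
  | empty =>
    rw [cycleProd_zero, MonoidAlgebra.one_def, coeff_single, Finsupp.single_apply]
    split_ifs <;> norm_num
  | cons i m ih => rw [cycleProd_cons]; exact coeff_mul_nonneg (coeff_classSum_nonneg _) ih g

theorem exists_mul_eq_of_coeff_cycleProd_cons_ne_zero {i : ℕ} {m : Multiset ℕ}
    {g : Perm (Fin n)} (h : (cycleProd n (i ::ₘ m)).coeff g ≠ 0) :
    ∃ a b, a.cycleType = {i} ∧ (cycleProd n m).coeff b ≠ 0 ∧ a * b = g := by
  rw [cycleProd_cons] at h
  obtain ⟨a, b, ha, hb, rfl⟩ := exists_mul_eq_of_coeff_mul_ne_zero h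
  rw [coeff_classSum] at ha
  exact ⟨a, b, by_contra fun h' => ha (if_neg h'), hb, rfl⟩

theorem eq_one_of_coeff_cycleProd_zero_ne_zero {g : Perm (Fin n)}
    (h : (cycleProd n 0).coeff g ≠ 0) : g = 1 := by
  classical
  exact Finset.mem_one.1 (support_coeff_one_subset (Finsupp.mem_support_iff.2 h))

theorem card_support_le_of_coeff_cycleProd_ne_zero {m : Multiset ℕ} {g : Perm (Fin n)}
    (h : (cycleProd n m).coeff g ≠ 0) : #g.support ≤ m.sum := by
  induction m using Multiset.induction_on generalizing g with
  | empty => simp [eq_one_of_coeff_cycleProd_zero_ne_zero h]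
  | cons i m ih =>
    obtain ⟨a, b, ha, hb, rfl⟩ := exists_mul_eq_of_coeff_cycleProd_cons_ne_zero h
    calc #(a * b).support ≤ #a.support + #b.support :=
          (card_le_card (support_mul_le a b)).trans (card_union_le _ _)
      _ ≤ i + m.sum := add_le_add (by rw [← sum_cycleType, ha, Multiset.sum_singleton]) (ih hb)
      _ = (i ::ₘ m).sum := (Multiset.sum_cons i m).symm

theorem sign_eq_of_coeff_cycleProd_ne_zero {m : Multiset ℕ} {g : Perm (Fin n)}
    (h : (cycleProd n m).coeff g ≠ 0) : sign g = (m.map fun i => -(-1 : ℤˣ) ^ i).prod := by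
  induction m using Multiset.induction_on generalizing g with
  | empty => simp [eq_one_of_coeff_cycleProd_zero_ne_zero h]
  | cons i m ih =>
    obtain ⟨a, b, ha, hb, rfl⟩ := exists_mul_eq_of_coeff_cycleProd_cons_ne_zero h
    rw [map_mul, sign_of_cycleType' a, ha, ih hb, Multiset.map_cons, Multiset.prod_cons,
      Multiset.map_singleton, Multiset.prod_singleton]

theorem cycleType_eq_of_coeff_cycleProd_ne_zero {m : Multiset ℕ} {g : Perm (Fin n)}
    (h : (cycleProd n m).coeff g ≠ 0) (hg : #g.support = m.sum) : g.cycleType = m := by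
  induction m using Multiset.induction_on generalizing g with
  | empty => simp [eq_one_of_coeff_cycleProd_zero_ne_zero h]
  | cons i m ih =>
    obtain ⟨a, b, ha, hb, rfl⟩ := exists_mul_eq_of_coeff_cycleProd_cons_ne_zero h
    have hcard_a : #a.support = i := by rw [← sum_cycleType, ha, Multiset.sum_singleton]
    have hcard_b := card_support_le_of_coeff_cycleProd_ne_zero hb
    have hmul : #(a * b).support ≤ #(a.support ∪ b.support) := card_le_card (support_mul_le a b)
    have hunion := card_union_le a.support b.support
    rw [Multiset.sum_cons] at hg
    have hdisj : a.Disjoint b :=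
      disjoint_iff_disjoint_support.2 (card_union_eq_card_add_card.1 (by omega))
    rw [hdisj.cycleType_mul, ha, ih hb (by omega), Multiset.singleton_add]

theorem one_le_coeff_cycleProd_cycleType (σ : Perm (Fin n)) :
    1 ≤ (cycleProd n σ.cycleType).coeff σ := by
  induction σ using cycle_induction_on with
  | base_one => simp [cycleProd_zero, MonoidAlgebra.one_def]
  | base_cycles σ hσ =>
    rw [hσ.cycleType, ← Multiset.cons_zero, cycleProd_cons, cycleProd_zero, mul_one,
      coeff_classSum, if_pos hσ.cycleType]
  | induction_disjoint σ τ hd hσ _ ih =>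
    have hσ_coeff : (classSum n {#σ.support}).coeff σ = 1 := by
      rw [coeff_classSum, if_pos hσ.cycleType]
    rw [hd.cycleType_mul, hσ.cycleType, Multiset.singleton_add, cycleProd_cons]
    calc (1 : ℚ)
        ≤ (classSum n {#σ.support}).coeff σ * (cycleProd n τ.cycleType).coeff τ := by
          rwa [hσ_coeff, one_mul]
      _ ≤ _ :=
          coeff_mul_coeff_le_coeff_mul (coeff_classSum_nonneg _) (coeff_cycleProd_nonneg _) σ τ

theorem card_support_lt_and_sign_eq_of_coeff_ne_zero {σ g : Perm (Fin n)}
    (h : (cycleProd n σ.cycleType -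
      (cycleProd n σ.cycleType).coeff σ • classSum n σ.cycleType).coeff g ≠ 0) :
    #g.support < #σ.support ∧ sign g = sign σ := by
  have hne : g.cycleType ≠ σ.cycleType := fun hg => h <| by
    simp [coeff_classSum, hg, coeff_eq_of_cycleType_eq (cycleProd_mem_center _) hg]
  have hP : (cycleProd n σ.cycleType).coeff g ≠ 0 := by simpa [coeff_classSum, hne] using h
  refine ⟨lt_of_le_of_ne ?_ fun hg => hne ?_, ?_⟩
  · simpa only [sum_cycleType] using card_support_le_of_coeff_cycleProd_ne_zero hP
  · exact cycleType_eq_of_coeff_cycleProd_ne_zero hP (by rw [hg, sum_cycleType])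
  · rw [sign_eq_of_coeff_cycleProd_ne_zero hP, sign_of_cycleType']

theorem exists_even_mem_cycleType_of_sign_eq_neg_one {σ : Perm (Fin n)} (hσ : sign σ = -1) :
    ∃ i ∈ σ.cycleType, Even i := by
  by_contra! hodd
  rw [sign_of_cycleType', Multiset.prod_eq_one fun u hu => ?_] at hσ
  · exact absurd hσ (by decide)
  · obtain ⟨i, hi, rfl⟩ := Multiset.mem_map.1 hu
    rw [(Nat.not_even_iff_odd.1 (hodd i hi)).neg_one_pow, neg_neg]

noncomputable abbrev cycleSumAlgebra (n N : ℕ) : Subalgebra ℚ (ℚ[Perm (Fin n)]) :=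
  Algebra.adjoin ℚ {x | ∃ i, 1 ≤ i ∧ i ≤ N ∧ x = cycleSum n i}

noncomputable abbrev evenCycleSumIdeal (n N : ℕ) : Ideal (cycleSumAlgebra n N) :=
  Ideal.span {x | ∃ j, 1 ≤ j ∧ 2 * j ≤ N ∧ (x : ℚ[Perm (Fin n)]) = cycleSum n (2 * j)}

/-- Lets the induction run on elements of `ℚ[Sₙ]` not yet known to lie in `cycleSumAlgebra`. -/
noncomputable def evenCycleSumSubmodule (n N : ℕ) : Submodule ℚ (ℚ[Perm (Fin n)]) :=
  ((evenCycleSumIdeal n N).restrictScalars ℚ).map (cycleSumAlgebra n N).val.toLinearMap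

variable {N : ℕ}

theorem mem_evenCycleSumSubmodule_iff {x : ℚ[Perm (Fin n)]} :
    x ∈ evenCycleSumSubmodule n N ↔
      ∃ h : x ∈ cycleSumAlgebra n N, ⟨x, h⟩ ∈ evenCycleSumIdeal n N := by
  constructor
  · rintro ⟨⟨y, hy⟩, hyI, rfl⟩
    exact ⟨hy, hyI⟩
  · rintro ⟨h, hI⟩
    exact ⟨⟨x, h⟩, hI, rfl⟩

theorem classSum_mem_cycleSumAlgebra {i : ℕ} (h2 : 2 ≤ i) (hi : i ≤ N) :
    classSum n {i} ∈ cycleSumAlgebra n N :=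
  Algebra.subset_adjoin ⟨i, by omega, hi, by rw [cycleSum, if_neg (by omega)]⟩

theorem cycleProd_mem_cycleSumAlgebra {m : Multiset ℕ} (hm : ∀ i ∈ m, 2 ≤ i ∧ i ≤ N) :
    cycleProd n m ∈ cycleSumAlgebra n N := by
  induction m using Multiset.induction_on with
  | empty => exact one_mem _
  | cons i m ih =>
    have hi := hm i (Multiset.mem_cons_self i m)
    rw [cycleProd_cons]
    exact mul_mem (classSum_mem_cycleSumAlgebra hi.1 hi.2)
      (ih fun j hj => hm j (Multiset.mem_cons_of_mem hj))

theorem cycleProd_mem_evenCycleSumSubmodule {m : Multiset ℕ}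
    (hm : ∀ i ∈ m, 2 ≤ i ∧ i ≤ N) {j : ℕ} (hj : 2 * j ∈ m) :
    cycleProd n m ∈ evenCycleSumSubmodule n N := by
  obtain ⟨hj2, hjN⟩ := hm _ hj
  have hrest : cycleProd n (m.erase (2 * j)) ∈ cycleSumAlgebra n N :=
    cycleProd_mem_cycleSumAlgebra fun i hi => hm i (Multiset.mem_of_mem_erase hi)
  have hgen : classSum n {2 * j} ∈ cycleSumAlgebra n N := classSum_mem_cycleSumAlgebra hj2 hjN
  rw [← Multiset.cons_erase hj, cycleProd_cons,
    ← Subalgebra.mem_center_iff.1 (classSum_mem_center _)]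
  have hgenI : (⟨_, hgen⟩ : cycleSumAlgebra n N) ∈ evenCycleSumIdeal n N :=
    Ideal.subset_span ⟨j, by omega, hjN, by rw [cycleSum, if_neg (by omega)]⟩
  exact ⟨_, Ideal.mul_mem_left _ ⟨_, hrest⟩ hgenI, rfl⟩

theorem classSum_cycleType_mem_evenCycleSumSubmodule (σ : Perm (Fin n)) (hσ : sign σ = -1)
    (hN : #σ.support ≤ N) : classSum n σ.cycleType ∈ evenCycleSumSubmodule n N := by
  set P := cycleProd n σ.cycleType
  set c := P.coeff σ
  have hc : c ≠ 0 := (zero_lt_one.trans_le (one_le_coeff_cycleProd_cycleType σ)).ne'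
  have hparts : ∀ i ∈ σ.cycleType, 2 ≤ i ∧ i ≤ N := fun i hi =>
    ⟨two_le_of_mem_cycleType hi, (Multiset.le_sum_of_mem hi).trans (by rwa [sum_cycleType])⟩
  obtain ⟨_, hi, j, rfl⟩ := exists_even_mem_cycleType_of_sign_eq_neg_one hσ
  have hP : P ∈ evenCycleSumSubmodule n N :=
    cycleProd_mem_evenCycleSumSubmodule hparts (two_mul j ▸ hi)
  have hD : P - c • classSum n σ.cycleType ∈ evenCycleSumSubmodule n N := by
    refine Submodule.span_le.2 ?_ (mem_span_classSum_of_mem_center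
      (sub_mem (cycleProd_mem_center _) (Subalgebra.smul_mem _ (classSum_mem_center _) c)))
    rintro _ ⟨g, hg, rfl⟩
    obtain ⟨hlt, hsign⟩ := card_support_lt_and_sign_eq_of_coeff_ne_zero hg
    exact classSum_cycleType_mem_evenCycleSumSubmodule g (hsign.trans hσ) (hlt.le.trans hN)
  have hσ_eq : classSum n σ.cycleType = c⁻¹ • (P - (P - c • classSum n σ.cycleType)) := by
    rw [sub_sub_cancel, smul_smul, inv_mul_cancel₀ hc, one_smul]
  rw [hσ_eq]
  exact Submodule.smul_mem _ _ (sub_mem hP hD)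
termination_by #σ.support

end ClassSums

theorem Nat.Partition.supp_le {n : ℕ} (μ : n.Partition) : μ.supp ≤ n :=
  calc μ.supp ≤ μ.supp + (μ.parts.filter (¬ 2 ≤ ·)).sum := Nat.le_add_right _ _
    _ = n := by rw [Nat.Partition.supp, Multiset.sum_filter_add_sum_filter_not, μ.parts_sum]

/-- Let `μ` be a partition of `n` labelling a conjugacy class
of odd permutations, and let `A` be the ℚ-subalgebra of `ℚ[Sₙ]` generated by
the cycle sums `sᵢ` for `1 ≤ i ≤ supp μ`.  Then `s_μ` lies in `A`, and, as an
element of `A`, it lies in the ideal of `A` generated by the even cycle sums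
`s_{2j}` with `2 ≤ 2j ≤ supp μ`.  (Equivalently, `s_μ` is a polynomial over ℚ
in the `sᵢ`, `i ≤ supp μ`, each of whose monomials contains a factor
`s_{2j}`.) -/
theorem classSum_of_odd_class_mem_even_ideal (n : ℕ) (μ : n.Partition)
    (hodd : ∀ σ : Equiv.Perm (Fin n),
      σ.cycleType = μ.parts.filter (2 ≤ ·) → Equiv.Perm.sign σ = -1) :
    ∃ h : classSum n (μ.parts.filter (2 ≤ ·)) ∈
        Algebra.adjoin ℚ {x : MonoidAlgebra ℚ (Equiv.Perm (Fin n)) |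
          ∃ i, 1 ≤ i ∧ i ≤ μ.supp ∧ x = cycleSum n i},
      (⟨classSum n (μ.parts.filter (2 ≤ ·)), h⟩ :
          Algebra.adjoin ℚ {x : MonoidAlgebra ℚ (Equiv.Perm (Fin n)) |
            ∃ i, 1 ≤ i ∧ i ≤ μ.supp ∧ x = cycleSum n i}) ∈
        Ideal.span {x : Algebra.adjoin ℚ {x : MonoidAlgebra ℚ (Equiv.Perm (Fin n)) |
            ∃ i, 1 ≤ i ∧ i ≤ μ.supp ∧ x = cycleSum n i} |
          ∃ j, 1 ≤ j ∧ 2 * j ≤ μ.supp ∧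
            (x : MonoidAlgebra ℚ (Equiv.Perm (Fin n))) = cycleSum n (2 * j)} := by
  obtain ⟨σ, hσ⟩ := (exists_with_cycleType_iff (Fin n)).2
    ⟨by rw [Fintype.card_fin]; exact μ.supp_le, fun a ha => (Multiset.mem_filter.1 ha).2⟩
  have hsupp : #σ.support = μ.supp := by rw [← sum_cycleType, hσ, Nat.Partition.supp]
  rw [← hσ]
  exact mem_evenCycleSumSubmodule_iff.1
    (classSum_cycleType_mem_evenCycleSumSubmodule σ (hodd σ hσ) hsupp.le)
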